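/- For K ≥ 0 let f_K be the normalized Rician fading density and let Q be the first-order Marcum Q-function. Let X and Y be independent real-valued random variables, with X having density f_{K_m} for some K_m ≥ 0 and Y exponentially distributed with rate 1 (density e^{-x} on [0,∞)). Let β_m > 0, β_I > 0, γ_t > 0 and N_0 > 0. Then ℙ( β_m·X / (β_I·Y + N_0) < γ_t ) = 1 − Q(√(2·K_m), √(γ_t·N_0/β_m)) + (γ_t·β_I/(2·β_m + γ_t·β_I))·exp( N_0/β_I − 2·K_m·β_m/(2·β_m + γ_t·β_I) )·Q( √(2·γ_t·K_m·β_I/(2·β_m + γ_t·β_I)), √(N_0·(2·β_m + γ_t·β_I)/(β_m·β_I)) ). (Theorem 1, Case 2: LoS main link and NLoS interference link.) -/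

import Mathlib

open MeasureTheory ProbabilityTheory Real Filter

/-- Modified Bessel function of the first kind of order zero. -/
noncomputable def besselI0 (x : ℝ) : ℝ :=
  ∑' n : ℕ, (x / 2) ^ (2 * n) / ((Nat.factorial n : ℝ)) ^ 2

/-- Normalized Rician (noncentral chi-squared, 2 d.o.f., noncentrality 2K) fading density. -/
noncomputable def ricianPdf (K : ℝ) (h : ℝ) : ℝ :=
  if h < 0 then 0
  else (1 / 2) * Real.exp (-K - h / 2) * ∑' n : ℕ, (K * h / 2) ^ n / ((Nat.factorial n : ℝ)) ^ 2

/-- Density of the exponential distribution with rate 1 (supported on [0,∞)). -/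
noncomputable def expPdf (x : ℝ) : ℝ := if x < 0 then 0 else Real.exp (-x)

/-- First-order Marcum Q-function. -/
noncomputable def marcumQ (a b : ℝ) : ℝ :=
  ∫ x in Set.Ioi b, x * Real.exp (-(x ^ 2 + a ^ 2) / 2) * besselI0 (a * x)

open Set

lemma summable_aux (c : ℝ) : Summable (fun n : ℕ => c ^ n / ((Nat.factorial n : ℝ)) ^ 2) := by
  have h := Real.summable_pow_div_factorial |c|
  refine Summable.of_abs (h.of_nonneg_of_le (fun n => abs_nonneg _) (fun n => ?_))
  rw [abs_div, abs_pow, abs_pow, abs_of_nonneg (by positivity : (0:ℝ) ≤ (Nat.factorial n : ℝ))]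
  have h1 : (1:ℝ) ≤ (Nat.factorial n : ℝ) := by
    exact_mod_cast Nat.one_le_iff_ne_zero.mpr (Nat.factorial_ne_zero n)
  have h2 : (Nat.factorial n : ℝ) ≤ ((Nat.factorial n : ℝ)) ^ 2 := by nlinarith
  exact div_le_div_of_nonneg_left (pow_nonneg (abs_nonneg c) n) (by linarith) h2

lemma besselI0_eq (K u : ℝ) (hK : 0 ≤ K) :
    besselI0 (Real.sqrt (2 * K) * u)
      = ∑' n : ℕ, (K * u ^ 2 / 2) ^ n / ((Nat.factorial n : ℝ)) ^ 2 := by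
  unfold besselI0
  congr 1; funext n; congr 1
  rw [pow_mul]
  congr 1
  have h2 : Real.sqrt (2 * K) ^ 2 = 2 * K := Real.sq_sqrt (by linarith)
  calc (Real.sqrt (2 * K) * u / 2) ^ 2 = Real.sqrt (2 * K) ^ 2 * u ^ 2 / 4 := by ring
    _ = K * u ^ 2 / 2 := by rw [h2]; ring

lemma measurable_rician_series (K : ℝ) :
    Measurable (fun h : ℝ => ∑' n : ℕ, (K * h / 2) ^ n / ((Nat.factorial n : ℝ)) ^ 2) := by
  apply measurable_of_tendsto_metrizable
    (f := fun N h => ∑ n ∈ Finset.range N, (K * h / 2) ^ n / ((Nat.factorial n : ℝ)) ^ 2)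
  · intro N
    exact Finset.measurable_sum _ (fun n _ => by fun_prop)
  · rw [tendsto_pi_nhds]
    intro h
    exact (summable_aux (K * h / 2)).hasSum.tendsto_sum_nat

lemma measurable_ricianPdf (K : ℝ) : Measurable (ricianPdf K) := by
  unfold ricianPdf
  refine Measurable.ite (measurableSet_lt measurable_id measurable_const) measurable_const ?_
  exact ((measurable_const.mul (by fun_prop : Measurable fun h : ℝ => Real.exp (-K - h / 2)))).mul
    (measurable_rician_series K)

lemma ricianPdf_nonneg (K : ℝ) (hK : 0 ≤ K) (h : ℝ) : 0 ≤ ricianPdf K h := by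
  unfold ricianPdf
  split
  · exact le_refl 0
  · rename_i hh
    push_neg at hh
    refine mul_nonneg (mul_nonneg (by norm_num) (Real.exp_nonneg _)) (tsum_nonneg fun n => ?_)
    exact div_nonneg (pow_nonneg (div_nonneg (mul_nonneg hK hh) (by norm_num)) n) (by positivity)

lemma integral_rician_Ioi (K t : ℝ) (hK : 0 ≤ K) (ht : 0 ≤ t) :
    ∫ x in Set.Ioi t, ricianPdf K x = marcumQ (Real.sqrt (2 * K)) (Real.sqrt t) := by
  have himg : (fun u : ℝ => u ^ 2) '' Set.Ioi (Real.sqrt t) = Set.Ioi t := by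
    ext x
    simp only [Set.mem_image, Set.mem_Ioi]
    constructor
    · rintro ⟨u, hu, rfl⟩
      have h0 : 0 ≤ Real.sqrt t := Real.sqrt_nonneg t
      calc t = Real.sqrt t ^ 2 := (Real.sq_sqrt ht).symm
        _ < u ^ 2 := by nlinarith
    · intro hx
      exact ⟨Real.sqrt x, Real.sqrt_lt_sqrt ht hx, Real.sq_sqrt (le_trans ht hx.le)⟩
  have hinj : Set.InjOn (fun u : ℝ => u ^ 2) (Set.Ioi (Real.sqrt t)) := by
    intro u hu v hv huv
    simp only [Set.mem_Ioi] at hu hv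
    simp only at huv
    have h0 : 0 ≤ Real.sqrt t := Real.sqrt_nonneg t
    have hu0 : 0 ≤ u := le_trans h0 hu.le
    have hv0 : 0 ≤ v := le_trans h0 hv.le
    calc u = Real.sqrt (u ^ 2) := (Real.sqrt_sq hu0).symm
      _ = Real.sqrt (v ^ 2) := by rw [huv]
      _ = v := Real.sqrt_sq hv0
  have hderiv : ∀ x ∈ Set.Ioi (Real.sqrt t),
      HasDerivWithinAt (fun u : ℝ => u ^ 2) (2 * x) (Set.Ioi (Real.sqrt t)) x := by
    intro x _
    simpa using (hasDerivAt_pow 2 x).hasDerivWithinAt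
  rw [← himg, integral_image_eq_integral_abs_deriv_smul measurableSet_Ioi hderiv hinj, marcumQ]
  refine setIntegral_congr_fun measurableSet_Ioi (fun u hu => ?_)
  simp only [Set.mem_Ioi] at hu
  have hu0 : 0 < u := lt_of_le_of_lt (Real.sqrt_nonneg t) hu
  have ha : Real.sqrt (2 * K) ^ 2 = 2 * K := Real.sq_sqrt (by linarith)
  rw [smul_eq_mul, besselI0_eq K u hK, abs_of_pos (by linarith : (0:ℝ) < 2 * u)]
  simp only [ricianPdf, if_neg (not_lt.mpr (sq_nonneg u))]
  rw [show (-(u ^ 2 + Real.sqrt (2 * K) ^ 2) / 2 : ℝ) = -K - u ^ 2 / 2 by rw [ha]; ring]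
  ring

lemma rician_tilt (K μ' s x : ℝ) (hs : s = 1 + 2 * μ') (hs0 : 0 < s) :
    ricianPdf K x * Real.exp (-(μ' * x))
      = Real.exp (-(K * (s - 1) / s)) * ricianPdf (K / s) (s * x) := by
  by_cases hx : x < 0
  · have : s * x < 0 := mul_neg_of_pos_of_neg hs0 hx
    simp [ricianPdf, if_pos hx, if_pos this]
  · push_neg at hx
    simp only [ricianPdf, if_neg (not_lt.mpr hx),
      if_neg (not_lt.mpr (mul_nonneg hs0.le hx))]
    have hsum : ∑' n : ℕ, (K / s * (s * x) / 2) ^ n / ((Nat.factorial n : ℝ)) ^ 2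
        = ∑' n : ℕ, (K * x / 2) ^ n / ((Nat.factorial n : ℝ)) ^ 2 := by
      congr 1; funext n; congr 2
      field_simp
    rw [hsum]
    have hexp : Real.exp (-K - x / 2) * Real.exp (-(μ' * x))
        = Real.exp (-(K * (s - 1) / s)) * Real.exp (-(K / s) - s * x / 2) := by
      rw [← Real.exp_add, ← Real.exp_add]
      congr 1
      field_simp
      subst hs
      ring
    set S := ∑' n : ℕ, (K * x / 2) ^ n / ((Nat.factorial n : ℝ)) ^ 2
    linear_combination (S / 2) * hexp

lemma measurable_expPdf : Measurable expPdf := by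
  unfold expPdf
  exact Measurable.ite (measurableSet_lt measurable_id measurable_const) measurable_const
    (by fun_prop)

lemma lint_exp_Ioi (m : ℝ) (hm : 0 ≤ m) :
    ∫⁻ y in Set.Ioi m, ENNReal.ofReal (expPdf y) = ENNReal.ofReal (Real.exp (-m)) := by
  have h1 : ∫⁻ y in Set.Ioi m, ENNReal.ofReal (expPdf y)
      = ∫⁻ y in Set.Ioi m, ENNReal.ofReal (Real.exp (-y)) := by
    refine setLIntegral_congr_fun measurableSet_Ioi (fun y hy => ?_)
    simp only [Set.mem_Ioi] at hy
    rw [expPdf, if_neg (not_lt.mpr (le_trans hm hy.le))]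
  rw [h1, ← ofReal_integral_eq_lintegral_ofReal]
  · rw [integral_exp_neg_Ioi]
  · exact (by simpa using exp_neg_integrableOn_Ioi m one_pos : IntegrableOn (fun y : ℝ => Real.exp (-y)) (Set.Ioi m))
  · exact Filter.Eventually.of_forall fun y => Real.exp_nonneg _

theorem outage_LoS_NLoS
    {Ω : Type*} [MeasureSpace Ω] [IsProbabilityMeasure (ℙ : Measure Ω)]
    (X Y : Ω → ℝ) (hX : Measurable X) (hY : Measurable Y)
    (hXY : IndepFun X Y ℙ)
    (Km : ℝ) (hKm : 0 ≤ Km)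
    (hXd : Measure.map X ℙ = volume.withDensity fun x => ENNReal.ofReal (ricianPdf Km x))
    (hYd : Measure.map Y ℙ = volume.withDensity fun x => ENNReal.ofReal (expPdf x))
    (βm βI γt N₀ : ℝ) (hβm : 0 < βm) (hβI : 0 < βI) (hγt : 0 < γt) (hN₀ : 0 < N₀) :
    (ℙ {ω | βm * X ω / (βI * Y ω + N₀) < γt}).toReal
      = 1 - marcumQ (Real.sqrt (2 * Km)) (Real.sqrt (γt * N₀ / βm))
        + (γt * βI / (2 * βm + γt * βI)) *
          Real.exp (N₀ / βI - 2 * Km * βm / (2 * βm + γt * βI)) *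
          marcumQ (Real.sqrt (2 * γt * Km * βI / (2 * βm + γt * βI)))
                  (Real.sqrt (N₀ * (2 * βm + γt * βI) / (βm * βI))) := by
  classical
  have hfm : Measurable (ricianPdf Km) := measurable_ricianPdf Km
  have hfnn : ∀ x, 0 ≤ ricianPdf Km x := ricianPdf_nonneg Km hKm
  have hγβ : (0:ℝ) < γt * βI := by positivity
  have hden : (0:ℝ) < 2 * βm + γt * βI := by positivity
  set t₀ : ℝ := γt * N₀ / βm with ht₀def
  have ht₀ : 0 < t₀ := by positivity
  set μ' : ℝ := βm / (γt * βI) with hμ'def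
  have hμ'0 : 0 < μ' := by positivity
  set s : ℝ := 1 + 2 * μ' with hsdef
  have hs0 : 0 < s := by positivity
  have hs_eq : s = (2 * βm + γt * βI) / (γt * βI) := by
    rw [hsdef, hμ'def]; field_simp; ring
  set c : ℝ → ℝ := fun x => (βm * x - γt * N₀) / (γt * βI) with hcdef
  have hcm : Measurable c := by rw [hcdef]; fun_prop
  set S : Set (ℝ × ℝ) := {p : ℝ × ℝ | βm * p.1 / (βI * p.2 + N₀) < γt} with hSdef
  have hSm : MeasurableSet S := by
    rw [hSdef]
    exact measurableSet_lt (by fun_prop) measurable_const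
  haveI hprobY : IsProbabilityMeasure (Measure.map Y ℙ) := Measure.isProbabilityMeasure_map hY.aemeasurable
  haveI hprobX : IsProbabilityMeasure (Measure.map X ℙ) := Measure.isProbabilityMeasure_map hX.aemeasurable
  have hmap : Measure.map (fun ω => (X ω, Y ω)) ℙ = (Measure.map X ℙ).prod (Measure.map Y ℙ) :=
    (ProbabilityTheory.indepFun_iff_map_prod_eq_prod_map_map hX.aemeasurable hY.aemeasurable).mp hXY
  have hPE : ℙ {ω | βm * X ω / (βI * Y ω + N₀) < γt}
      = ((Measure.map X ℙ).prod (Measure.map Y ℙ)) S := by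
    rw [← hmap, Measure.map_apply (hX.prodMk hY) hSm]
    rfl
  -- the Y-section measure
  have hsec : ∀ x : ℝ, (Measure.map Y ℙ) (Prod.mk x ⁻¹' S)
      = ENNReal.ofReal (Real.exp (-(max (c x) 0))) := by
    intro x
    have hTm : MeasurableSet (Prod.mk x ⁻¹' S) := hSm.preimage measurable_prodMk_left
    rw [hYd, withDensity_apply _ hTm]
    have key : ∫⁻ y in Prod.mk x ⁻¹' S, ENNReal.ofReal (expPdf y)
        = ∫⁻ y in Set.Ioi (max (c x) 0), ENNReal.ofReal (expPdf y) := by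
      rw [← lintegral_indicator hTm, ← lintegral_indicator measurableSet_Ioi]
      refine lintegral_congr_ae ?_
      have h0 : ∀ᵐ y : ℝ, y ≠ (0:ℝ) := by
        rw [ae_iff]
        simp only [ne_eq, not_not, Set.setOf_eq_eq_singleton]
        exact measure_singleton 0
      filter_upwards [h0] with y hy
      by_cases hneg : y < 0
      · simp [Set.indicator_apply, expPdf, if_pos hneg]
      · push_neg at hneg
        have hypos : 0 < y := lt_of_le_of_ne hneg (Ne.symm hy)
        have hmem : (y ∈ Prod.mk x ⁻¹' S) ↔ y ∈ Set.Ioi (max (c x) 0) := by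
          simp only [Set.mem_preimage, hSdef, Set.mem_setOf_eq, Set.mem_Ioi, max_lt_iff]
          have hdpos : 0 < βI * y + N₀ := by positivity
          rw [div_lt_iff₀ hdpos]
          have hcx : c x < y ↔ βm * x - γt * N₀ < γt * βI * y := by
            rw [hcdef]
            simp only
            rw [div_lt_iff₀ hγβ]
            constructor <;> intro h <;> nlinarith
          constructor
          · intro h
            exact ⟨hcx.mpr (by nlinarith), hypos⟩
          · rintro ⟨h1, -⟩
            have := hcx.mp h1
            nlinarith
        rw [Set.indicator_apply, Set.indicator_apply, if_congr hmem rfl rfl]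
    rw [key, lint_exp_Ioi _ (le_max_right _ _)]
  have hFx : Measurable fun x : ℝ => ENNReal.ofReal (ricianPdf Km x) :=
    ENNReal.measurable_ofReal.comp hfm
  have hφm : Measurable fun x : ℝ => ENNReal.ofReal (Real.exp (-(max (c x) 0))) :=
    ENNReal.measurable_ofReal.comp
      (Real.measurable_exp.comp ((hcm.max measurable_const).neg))
  have h2 : ℙ {ω | βm * X ω / (βI * Y ω + N₀) < γt}
      = ∫⁻ x, ENNReal.ofReal (ricianPdf Km x)
          * ENNReal.ofReal (Real.exp (-(max (c x) 0))) ∂volume := by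
    rw [hPE, Measure.prod_apply hSm, lintegral_congr hsec, hXd,
      lintegral_withDensity_eq_lintegral_mul volume hFx hφm]
    rfl
  -- total mass of the Rician density
  have htot : ∫⁻ x, ENNReal.ofReal (ricianPdf Km x) ∂volume = 1 := by
    have h := measure_univ (μ := Measure.map X ℙ)
    rw [hXd, withDensity_apply _ MeasurableSet.univ, Measure.restrict_univ] at h
    exact h
  have hint : Integrable (ricianPdf Km) := by
    refine ⟨hfm.aestronglyMeasurable, ?_⟩
    rw [hasFiniteIntegral_iff_ofReal (Filter.Eventually.of_forall hfnn), htot]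
    exact ENNReal.one_lt_top
  have hcIoi : ∀ x ∈ Set.Ioi t₀, 0 ≤ c x := by
    intro x hx
    simp only [Set.mem_Ioi] at hx
    rw [ht₀def, div_lt_iff₀ hβm] at hx
    rw [hcdef]
    simp only
    exact div_nonneg (by nlinarith) hγβ.le
  have hintB : IntegrableOn (fun x => ricianPdf Km x * Real.exp (-(c x))) (Set.Ioi t₀) := by
    refine Integrable.mono hint.integrableOn ((hfm.mul (by fun_prop)).aestronglyMeasurable) ?_
    refine (ae_restrict_iff' measurableSet_Ioi).2 (Filter.Eventually.of_forall fun x hx => ?_)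
    have h0c : 0 ≤ c x := hcIoi x hx
    rw [Real.norm_eq_abs, Real.norm_eq_abs,
      abs_of_nonneg (mul_nonneg (hfnn x) (Real.exp_nonneg _)), abs_of_nonneg (hfnn x)]
    calc ricianPdf Km x * Real.exp (-(c x)) ≤ ricianPdf Km x * 1 :=
          mul_le_mul_of_nonneg_left (Real.exp_le_one_iff.mpr (by linarith)) (hfnn x)
      _ = ricianPdf Km x := mul_one _
  have A0 : 0 ≤ ∫ x in Set.Iic t₀, ricianPdf Km x :=
    setIntegral_nonneg measurableSet_Iic fun x _ => hfnn x
  have B0 : 0 ≤ ∫ x in Set.Ioi t₀, ricianPdf Km x * Real.exp (-(c x)) :=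
    setIntegral_nonneg measurableSet_Ioi fun x _ => mul_nonneg (hfnn x) (Real.exp_nonneg _)
  have hIic : ∫⁻ x in Set.Iic t₀, ENNReal.ofReal (ricianPdf Km x)
        * ENNReal.ofReal (Real.exp (-(max (c x) 0)))
      = ∫⁻ x in Set.Iic t₀, ENNReal.ofReal (ricianPdf Km x) := by
    refine setLIntegral_congr_fun measurableSet_Iic (fun x hx => ?_)
    simp only [Set.mem_Iic] at hx
    have hcx : c x ≤ 0 := by
      rw [hcdef]
      simp only
      apply div_nonpos_of_nonpos_of_nonneg _ hγβ.le
      rw [ht₀def, le_div_iff₀ hβm] at hx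
      nlinarith
    rw [max_eq_right hcx]
    simp
  have hIoi : ∫⁻ x in Set.Ioi t₀, ENNReal.ofReal (ricianPdf Km x)
        * ENNReal.ofReal (Real.exp (-(max (c x) 0)))
      = ∫⁻ x in Set.Ioi t₀, ENNReal.ofReal (ricianPdf Km x * Real.exp (-(c x))) := by
    refine setLIntegral_congr_fun measurableSet_Ioi (fun x hx => ?_)
    rw [max_eq_left (hcIoi x hx), ENNReal.ofReal_mul (hfnn x)]
  have hofA : ENNReal.ofReal (∫ x in Set.Iic t₀, ricianPdf Km x)
      = ∫⁻ x in Set.Iic t₀, ENNReal.ofReal (ricianPdf Km x) :=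
    ofReal_integral_eq_lintegral_ofReal hint.integrableOn
      (Filter.Eventually.of_forall hfnn)
  have hofB : ENNReal.ofReal (∫ x in Set.Ioi t₀, ricianPdf Km x * Real.exp (-(c x)))
      = ∫⁻ x in Set.Ioi t₀, ENNReal.ofReal (ricianPdf Km x * Real.exp (-(c x))) :=
    ofReal_integral_eq_lintegral_ofReal hintB
      (Filter.Eventually.of_forall fun x => mul_nonneg (hfnn x) (Real.exp_nonneg _))
  have hmain : ℙ {ω | βm * X ω / (βI * Y ω + N₀) < γt}
      = ENNReal.ofReal (∫ x in Set.Iic t₀, ricianPdf Km x)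
        + ENNReal.ofReal (∫ x in Set.Ioi t₀, ricianPdf Km x * Real.exp (-(c x))) := by
    rw [h2, ← lintegral_add_compl (fun x => ENNReal.ofReal (ricianPdf Km x)
      * ENNReal.ofReal (Real.exp (-(max (c x) 0)))) (measurableSet_Iic (a := t₀)),
      Set.compl_Iic, hIic, hIoi, hofA, hofB]
  -- evaluate the two real integrals
  have hone : ∫ x, ricianPdf Km x = 1 := by
    rw [integral_eq_lintegral_of_nonneg_ae (Filter.Eventually.of_forall hfnn)
      hfm.aestronglyMeasurable, htot, ENNReal.toReal_one]
  have hQ1 : ∫ x in Set.Ioi t₀, ricianPdf Km x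
      = marcumQ (Real.sqrt (2 * Km)) (Real.sqrt t₀) := integral_rician_Ioi Km t₀ hKm ht₀.le
  have hA : ∫ x in Set.Iic t₀, ricianPdf Km x
      = 1 - marcumQ (Real.sqrt (2 * Km)) (Real.sqrt t₀) := by
    have hadd := integral_add_compl (measurableSet_Iic (a := t₀)) hint
    rw [Set.compl_Iic] at hadd
    linarith [hadd]
  have hB : ∫ x in Set.Ioi t₀, ricianPdf Km x * Real.exp (-(c x))
      = s⁻¹ * Real.exp (N₀ / βI - Km * (s - 1) / s)
        * marcumQ (Real.sqrt (2 * (Km / s))) (Real.sqrt (s * t₀)) := by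
    have step1 : ∀ x : ℝ, ricianPdf Km x * Real.exp (-(c x))
        = (Real.exp (N₀ / βI) * Real.exp (-(Km * (s - 1) / s))) * ricianPdf (Km / s) (s * x) := by
      intro x
      have hce : Real.exp (-(c x)) = Real.exp (N₀ / βI) * Real.exp (-(μ' * x)) := by
        rw [← Real.exp_add]
        congr 1
        rw [hcdef, hμ'def]
        simp only
        field_simp
        ring
      rw [hce]
      have htilt := rician_tilt Km μ' s x hsdef hs0
      calc ricianPdf Km x * (Real.exp (N₀ / βI) * Real.exp (-(μ' * x)))
          = Real.exp (N₀ / βI) * (ricianPdf Km x * Real.exp (-(μ' * x))) := by ring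
        _ = Real.exp (N₀ / βI)
            * (Real.exp (-(Km * (s - 1) / s)) * ricianPdf (Km / s) (s * x)) := by rw [htilt]
        _ = _ := by ring
    rw [setIntegral_congr_fun measurableSet_Ioi (fun x _ => step1 x), integral_const_mul,
      integral_comp_mul_left_Ioi (fun u => ricianPdf (Km / s) u) t₀ hs0, smul_eq_mul,
      integral_rician_Ioi (Km / s) (s * t₀) (by positivity) (by positivity)]
    rw [← Real.exp_add]
    ring_nf
  -- final algebra
  have e1 : s⁻¹ = γt * βI / (2 * βm + γt * βI) := by
    rw [hs_eq, inv_div]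
  have e2 : N₀ / βI - Km * (s - 1) / s = N₀ / βI - 2 * Km * βm / (2 * βm + γt * βI) := by
    rw [hs_eq]
    field_simp
    ring_nf
    all_goals simp
  have e3 : 2 * (Km / s) = 2 * γt * Km * βI / (2 * βm + γt * βI) := by
    rw [hs_eq]
    rw [div_div_eq_mul_div]
    field_simp
  have e4 : s * t₀ = N₀ * (2 * βm + γt * βI) / (βm * βI) := by
    rw [hs_eq, ht₀def]
    field_simp
  rw [hmain, ENNReal.toReal_add ENNReal.ofReal_ne_top ENNReal.ofReal_ne_top,
    ENNReal.toReal_ofReal A0, ENNReal.toReal_ofReal B0, hA, hB, e1, e2, e3, e4]
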